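/- arXiv:1801.00032 — 5 statements merged into one kernel-verified Lean document; each statement's English description precedes it below -/
import Mathlib

section
/- Gluing lemma for half-space pieces (Lemma 6.3, topological case): Let n ≥ 1 and let H ⊆ ℝ^n be a closed set, and let A', B' ⊆ ℝ^n be closed sets with A' ∪ B' = ℝ^n and A' ∩ B' = H. Suppose there exist homeomorphisms g : A' → {x ∈ ℝ^n : x_n ≥ 0} and h : B' → {x ∈ ℝ^n : x_n ≤ 0} (with respect to the subspace topologies) such that g(H) = {x : x_n = 0} = h(H). Then there exists a homeomorphism F : ℝ^n → ℝ^n with F(H) = {x ∈ ℝ^n : x_n = 0}. -/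
/-!
On the hyperplane `P = {ℓ = 0}` the two charts differ by the homeomorphism `φ = g ∘ h⁻¹` of `P`.
Extending `φ` levelwise through the splitting `E ≃ ℝ × P` gives a homeomorphism `Φ` of `E` that
preserves `ℓ`, hence the lower half-space. Then `g` and `Φ ∘ h` agree on `H = A ∩ B`, so they glue
along the closed covers `A ∪ B` of the source and `{0 ≤ ℓ} ∪ {ℓ ≤ 0}` of `E`, and the glued
homeomorphism maps `H` onto `P` because `g` does.
-/

open Set Topology

section Glue

variable {X Y : Type*} {A B : Set X}

open Classical in
noncomputable def glue (hAB : A ∪ B = univ) (f : A → Y) (k : B → Y) (x : X) : Y :=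
  if hx : x ∈ A then f ⟨x, hx⟩ else k ⟨x, (eq_univ_iff_forall.1 hAB x).resolve_left hx⟩

variable {hAB : A ∪ B = univ} {f : A → Y} {k : B → Y}

theorem glue_of_mem_left {x : X} (hx : x ∈ A) : glue hAB f k x = f ⟨x, hx⟩ :=
  dif_pos hx

theorem glue_of_mem_right (hfk : ∀ x (ha : x ∈ A) (hb : x ∈ B), f ⟨x, ha⟩ = k ⟨x, hb⟩)
    {x : X} (hx : x ∈ B) : glue hAB f k x = k ⟨x, hx⟩ := by
  by_cases ha : x ∈ A
  · rw [glue_of_mem_left ha, hfk x ha hx]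
  · exact dif_neg ha

variable [TopologicalSpace X] [TopologicalSpace Y]

theorem continuous_glue (hA : IsClosed A) (hB : IsClosed B) (hf : Continuous f)
    (hk : Continuous k) (hfk : ∀ x (ha : x ∈ A) (hb : x ∈ B), f ⟨x, ha⟩ = k ⟨x, hb⟩) :
    Continuous (glue hAB f k) := by
  rw [← continuousOn_univ, ← hAB]
  refine ContinuousOn.union_of_isClosed ?_ ?_ hA hB <;>
    rw [continuousOn_iff_continuous_domRestrict]
  · convert hf using 1
    exact funext fun x => glue_of_mem_left x.2
  · convert hk using 1
    exact funext fun x => glue_of_mem_right hfk x.2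

variable {C D : Set Y} {hCD : C ∪ D = univ}

theorem leftInverse_glue (f : A ≃ₜ C) (k : B ≃ₜ D)
    (hfk : ∀ x (ha : x ∈ A) (hb : x ∈ B), (f ⟨x, ha⟩ : Y) = k ⟨x, hb⟩)
    (hfk_symm : ∀ y (hc : y ∈ C) (hd : y ∈ D), (f.symm ⟨y, hc⟩ : X) = k.symm ⟨y, hd⟩) :
    Function.LeftInverse (glue hCD (Subtype.val ∘ f.symm) (Subtype.val ∘ k.symm))
      (glue hAB (Subtype.val ∘ f) (Subtype.val ∘ k)) := by
  intro x
  rcases eq_univ_iff_forall.1 hAB x with hx | hx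
  · rw [glue_of_mem_left hx, Function.comp_apply, glue_of_mem_left (f _).2]
    simp
  · rw [glue_of_mem_right hfk hx, Function.comp_apply, glue_of_mem_right hfk_symm (k _).2]
    simp

theorem exists_homeomorph_glue (hA : IsClosed A) (hB : IsClosed B) (hC : IsClosed C)
    (hD : IsClosed D) (hAB : A ∪ B = univ) (hCD : C ∪ D = univ) (f : A ≃ₜ C) (k : B ≃ₜ D)
    (hfk : ∀ x (ha : x ∈ A) (hb : x ∈ B), (f ⟨x, ha⟩ : Y) = k ⟨x, hb⟩)
    (hf_symm : ∀ y (hc : y ∈ C), y ∈ D → (f.symm ⟨y, hc⟩ : X) ∈ B) :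
    ∃ F : X ≃ₜ Y, ∀ x (hx : x ∈ A), F x = f ⟨x, hx⟩ := by
  have hfk_symm : ∀ y (hc : y ∈ C) (hd : y ∈ D), (f.symm ⟨y, hc⟩ : X) = k.symm ⟨y, hd⟩ := by
    intro y hc hd
    have hk : k ⟨_, hf_symm y hc hd⟩ = ⟨y, hd⟩ := by
      ext
      rw [← hfk _ (f.symm _).2]
      simp
    rw [← hk, Homeomorph.symm_apply_apply]
  refine ⟨{ toFun := glue hAB (Subtype.val ∘ f) (Subtype.val ∘ k)
            invFun := glue hCD (Subtype.val ∘ f.symm) (Subtype.val ∘ k.symm)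
            left_inv := leftInverse_glue f k hfk hfk_symm
            right_inv := leftInverse_glue f.symm k.symm hfk_symm hfk
            continuous_toFun := continuous_glue hA hB (by fun_prop) (by fun_prop) hfk
            continuous_invFun := continuous_glue hC hD (by fun_prop) (by fun_prop) hfk_symm },
    fun x hx => glue_of_mem_left (hAB := hAB) hx⟩

end Glue

theorem Homeomorph.exists_restrict_of_image_eq {X Y : Type*} [TopologicalSpace X]
    [TopologicalSpace Y] {A S : Set X} {C T : Set Y} (e : A ≃ₜ C) (hSA : S ⊆ A)
    (he : (fun p : A => (e p : Y)) '' {p | (p : X) ∈ S} = T) :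
    ∃ ψ : S ≃ₜ T, ∀ x : S, (ψ x : Y) = e ⟨x, hSA x.2⟩ := by
  have hemb : IsEmbedding fun x : S => (e ⟨x, hSA x.2⟩ : Y) :=
    IsEmbedding.subtypeVal.comp (e.isEmbedding.comp (IsEmbedding.inclusion hSA))
  have hrange : range (fun x : S => (e ⟨x, hSA x.2⟩ : Y)) = T := by
    rw [← he]
    ext y
    constructor
    · rintro ⟨⟨x, hx⟩, rfl⟩
      exact ⟨⟨x, hSA hx⟩, hx, rfl⟩
    · rintro ⟨⟨x, _⟩, hx, rfl⟩
      exact ⟨⟨x, hx⟩, rfl⟩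
  exact ⟨hemb.toHomeomorph.trans (Homeomorph.setCongr hrange), fun x => rfl⟩

theorem ContinuousLinearMap.exists_homeomorph_extend_ker {R M M₂ : Type*} [Ring R]
    [TopologicalSpace M] [AddCommGroup M] [Module R M] [IsTopologicalAddGroup M]
    [TopologicalSpace M₂] [AddCommGroup M₂] [Module R M₂]
    (f₁ : M →L[R] M₂) (f₂ : M₂ →L[R] M) (hf : Function.RightInverse f₂ f₁)
    (φ : f₁.ker ≃ₜ f₁.ker) :
    ∃ Φ : M ≃ₜ M, (∀ x, f₁ (Φ x) = f₁ x) ∧ ∀ x : f₁.ker, Φ x = φ x := by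
  let e := ContinuousLinearEquiv.equivOfRightInverse f₁ f₂ hf
  refine ⟨e.toHomeomorph.trans (((Homeomorph.refl M₂).prodCongr φ).trans e.symm.toHomeomorph),
    fun x => ?_, fun x => ?_⟩
  · simp [e, hf _]
  · have hx : f₁ x = 0 := x.2
    simp [e, Subtype.ext_iff, hx]

section HalfSpace

variable {X E : Type*} [TopologicalSpace X] [AddCommGroup E] [Module ℝ E] [TopologicalSpace E]
  [IsTopologicalAddGroup E] [ContinuousSMul ℝ E] {ℓ : E →L[ℝ] ℝ} {v : E} {A B H : Set X}

theorem exists_lower_chart_agreeing_on_inter (hv : ℓ v = 1) (hinter : A ∩ B = H)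
    (g : A ≃ₜ {x | 0 ≤ ℓ x}) (h : B ≃ₜ {x | ℓ x ≤ 0})
    (hg : (fun p : A => (g p : E)) '' {p | (p : X) ∈ H} = {x | ℓ x = 0})
    (hh : (fun p : B => (h p : E)) '' {p | (p : X) ∈ H} = {x | ℓ x = 0}) :
    ∃ k : B ≃ₜ {x | ℓ x ≤ 0}, ∀ x (ha : x ∈ A) (hb : x ∈ B), (g ⟨x, ha⟩ : E) = k ⟨x, hb⟩ := by
  obtain ⟨ψg, hψg⟩ :=
    g.exists_restrict_of_image_eq (T := ℓ.ker) (hinter ▸ inter_subset_left) hg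
  obtain ⟨ψh, hψh⟩ :=
    h.exists_restrict_of_image_eq (T := ℓ.ker) (hinter ▸ inter_subset_right) hh
  obtain ⟨Φ, hΦℓ, hΦ⟩ := ℓ.exists_homeomorph_extend_ker (.toSpanSingleton ℝ v)
    (fun t => by simp [hv]) (ψh.symm.trans ψg)
  refine ⟨h.trans (Φ.sets (by ext x; simp [hΦℓ])), fun x ha hb => ?_⟩
  have hx : x ∈ H := hinter ▸ ⟨ha, hb⟩
  calc (g ⟨x, ha⟩ : E) = ψg ⟨x, hx⟩ := (hψg ⟨x, hx⟩).symm
    _ = Φ (ψh ⟨x, hx⟩) := by simp [hΦ]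
    _ = Φ (h ⟨x, hb⟩) := by rw [hψh]

theorem exists_homeomorph_image_eq_ker_of_half_space_charts (hv : ℓ v = 1)
    (hA : IsClosed A) (hB : IsClosed B) (hunion : A ∪ B = univ) (hinter : A ∩ B = H)
    (g : A ≃ₜ {x | 0 ≤ ℓ x}) (h : B ≃ₜ {x | ℓ x ≤ 0})
    (hg : (fun p : A => (g p : E)) '' {p | (p : X) ∈ H} = {x | ℓ x = 0})
    (hh : (fun p : B => (h p : E)) '' {p | (p : X) ∈ H} = {x | ℓ x = 0}) :
    ∃ F : X ≃ₜ E, F '' H = {x | ℓ x = 0} := by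
  obtain ⟨k, hgk⟩ := exists_lower_chart_agreeing_on_inter hv hinter g h hg hh
  have hg_symm (y : E) (hc : 0 ≤ ℓ y) (hd : ℓ y ≤ 0) : (g.symm ⟨y, hc⟩ : X) ∈ B := by
    obtain ⟨p, hp, hpy⟩ : y ∈ (fun p : A => (g p : E)) '' {p | (p : X) ∈ H} :=
      hg ▸ le_antisymm hd hc
    obtain rfl : p = g.symm ⟨y, hc⟩ := by rw [g.eq_symm_apply]; exact Subtype.ext hpy
    exact (hinter ▸ hp).2
  obtain ⟨F, hF⟩ := exists_homeomorph_glue hA hB (isClosed_le continuous_const ℓ.continuous)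
    (isClosed_le ℓ.continuous continuous_const) hunion
    (eq_univ_of_forall fun y => le_total 0 (ℓ y)) g k hgk hg_symm
  refine ⟨F, ?_⟩
  have hFg : (fun p : A => (g p : E)) = F ∘ Subtype.val := funext fun p => (hF p p.2).symm
  rw [← hg, hFg, image_comp, ← preimage_ofPred_eq, ofPred_mem_eq, Subtype.image_preimage_coe,
    inter_eq_right.2 (hinter ▸ inter_subset_left)]

end HalfSpace

/-- Gluing lemma for half-space pieces (Lemma 6.3, topological case). -/
theorem gluing_half_spaces
    (n : ℕ) (hn : 1 ≤ n)
    (H A' B' : Set (EuclideanSpace ℝ (Fin n)))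
    (hAcl : IsClosed A') (hBcl : IsClosed B')
    (hunion : A' ∪ B' = Set.univ) (hinter : A' ∩ B' = H)
    (g : A' ≃ₜ {x : EuclideanSpace ℝ (Fin n) | 0 ≤ x ⟨n - 1, by omega⟩})
    (h : B' ≃ₜ {x : EuclideanSpace ℝ (Fin n) | x ⟨n - 1, by omega⟩ ≤ 0})
    (hg : (fun p : A' => (g p : EuclideanSpace ℝ (Fin n)))
            '' {p : A' | (p : EuclideanSpace ℝ (Fin n)) ∈ H}
          = {x : EuclideanSpace ℝ (Fin n) | x ⟨n - 1, by omega⟩ = 0})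
    (hh : (fun p : B' => (h p : EuclideanSpace ℝ (Fin n)))
            '' {p : B' | (p : EuclideanSpace ℝ (Fin n)) ∈ H}
          = {x : EuclideanSpace ℝ (Fin n) | x ⟨n - 1, by omega⟩ = 0}) :
    ∃ F : EuclideanSpace ℝ (Fin n) ≃ₜ EuclideanSpace ℝ (Fin n),
      ⇑F '' H = {x : EuclideanSpace ℝ (Fin n) | x ⟨n - 1, by omega⟩ = 0} :=
  exists_homeomorph_image_eq_ker_of_half_space_charts
    (ℓ := EuclideanSpace.proj (⟨n - 1, by omega⟩ : Fin n))
    (v := EuclideanSpace.single (⟨n - 1, by omega⟩ : Fin n) 1) (by simp)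
    hAcl hBcl hunion hinter g h hg hh
end

section
/- Algebraic core of the Mittag-Leffler lemma (telescoping solution, from the proof of Lemma 4.5(a)): Let (G_i)_{i ∈ ℕ} be groups with homomorphisms f_i : G_{i+1} → G_i, and suppose that for every i the image of the composite f_i ∘ f_{i+1} : G_{i+2} → G_i equals the image of f_i : G_{i+1} → G_i. Then for every sequence of elements x_i ∈ G_i there exists a sequence z_i ∈ G_i such that x_i = z_i · (f_i(z_{i+1}))^{-1} in G_i for all i ∈ ℕ. -/
/-- Algebraic core of the Mittag-Leffler lemma (telescoping solution). -/
theorem mittagLeffler_telescoping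
    (G : ℕ → Type*) [∀ i, Group (G i)]
    (f : ∀ i, G (i + 1) →* G i)
    (hml : ∀ i, ((f i).comp (f (i + 1))).range = (f i).range)
    (x : ∀ i, G i) :
    ∃ z : ∀ i, G i, ∀ i, x i = z i * (f i (z (i + 1)))⁻¹ := by
  have key : ∀ i (a : G (i + 1)), ∃ b : G (i + 2), f i (f (i + 1) b) = f i a := by
    intro i a
    have : f i a ∈ ((f i).comp (f (i + 1))).range := by
      rw [hml i]; exact ⟨a, rfl⟩
    obtain ⟨b, hb⟩ := this
    exact ⟨b, hb⟩
  let c : ∀ i, G (i + 1) := fun i =>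
    Nat.rec 1 (fun n cn => Classical.choose (key n ((x (n + 1))⁻¹ * cn))) i
  have hc : ∀ n, f n (f (n + 1) (c (n + 1))) = f n ((x (n + 1))⁻¹ * c n) :=
    fun n => Classical.choose_spec (key n ((x (n + 1))⁻¹ * c n))
  refine ⟨fun i => x i * f i (c i), fun i => ?_⟩
  have h := hc i
  simp only [map_mul, map_inv] at h ⊢
  rw [h]
  group
end

section
/- Uniqueness of proper rays in Euclidean space up to proper homotopy (instance of Lemma 4.5(a) for the simply connected end of ℝ^n): Let n ≥ 2. Then any two proper continuous maps γ₀, γ₁ : [0,∞) → ℝ^n are properly homotopic, i.e., there exists a continuous proper map H : [0,1] × [0,∞) → ℝ^n with H(0,t) = γ₀(t) and H(1,t) = γ₁(t) for all t. -/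
/-!
A proper ray `γ` in a real normed space of dimension at least two is properly homotopic to a
standard ray `t ↦ t • v`: first move its starting time past the times where `γ` can vanish, then
pull the direction of `γ t` back along the curve to a fixed direction while keeping the norm
`‖γ t‖`, and finally interpolate the radii linearly while turning the direction along a path in
the punctured space. Along each of these homotopies the norm tends to infinity uniformly in the
homotopy parameter, and this makes the homotopy proper on `[0,1] × [0,∞)`.
-/

open Set Filter Topology Metric

theorem Set.continuous_projIci {α : Type*} [LinearOrder α] [TopologicalSpace α]
    [OrderClosedTopology α] {a : α} : Continuous (projIci a) :=
  Continuous.subtype_mk (by fun_prop) _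

theorem Set.tendsto_projIci_atTop_cocompact (a : ℝ) :
    Tendsto (projIci a) atTop (cocompact (Ici a)) := by
  refine tendsto_cocompact_of_tendsto_dist_comp_atTop ⟨a, self_mem_Ici⟩ ?_
  refine tendsto_atTop_mono (fun t => ?_) (tendsto_atTop_add_const_right _ (-a) tendsto_id)
  rw [Subtype.dist_eq, Real.dist_eq, coe_projIci, id]
  linarith [le_abs_self (max a t - a), le_max_right a t]

section Escaping

variable {E : Type*} [NormedAddCommGroup E]

/-- Homotopies of curves are parametrised by all of `ℝ × ℝ`, to state continuity without
subtypes; only `[0,1] × [0,∞)` matters. -/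
structure IsEscapingHomotopy (H : ℝ × ℝ → E) (f g : ℝ → E) : Prop where
  continuous : Continuous H
  apply_zero : ∀ t, H (0, t) = f t
  apply_one : ∀ t, H (1, t) = g t
  eventually_le_norm : ∀ R, ∀ᶠ t in atTop, ∀ s ∈ Icc (0 : ℝ) 1, R ≤ ‖H (s, t)‖

def EscapingHomotopic (f g : ℝ → E) : Prop :=
  ∃ H, IsEscapingHomotopy H f g

namespace IsEscapingHomotopy

variable {H H₁ H₂ : ℝ × ℝ → E} {f g k : ℝ → E}

theorem symm (h : IsEscapingHomotopy H f g) :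
    IsEscapingHomotopy (fun p => H (1 - p.1, p.2)) g f where
  continuous := h.continuous.comp (by fun_prop)
  apply_zero t := by simpa using h.apply_one t
  apply_one t := by simpa using h.apply_zero t
  eventually_le_norm R := (h.eventually_le_norm R).mono fun _ ht s hs =>
    ht (1 - s) ⟨by linarith [hs.2], by linarith [hs.1]⟩

theorem trans (h₁ : IsEscapingHomotopy H₁ f g) (h₂ : IsEscapingHomotopy H₂ g k) :
    IsEscapingHomotopy
      (fun p => if p.1 ≤ 1 / 2 then H₁ (2 * p.1, p.2) else H₂ (2 * p.1 - 1, p.2)) f k where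
  continuous := by
    refine Continuous.if_le (h₁.continuous.comp (by fun_prop)) (h₂.continuous.comp (by fun_prop))
      (by fun_prop) (by fun_prop) fun p hp => ?_
    simp only [hp]
    norm_num [h₁.apply_one, h₂.apply_zero]
  apply_zero t := by norm_num [h₁.apply_zero]
  apply_one t := by norm_num [h₂.apply_one]
  eventually_le_norm R :=
    ((h₁.eventually_le_norm R).and (h₂.eventually_le_norm R)).mono fun t ht s hs => by
      dsimp only
      split_ifs with hs'
      · exact ht.1 _ ⟨by linarith [hs.1], by linarith⟩
      · exact ht.2 _ ⟨by linarith, by linarith [hs.2]⟩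

theorem isProperMap_restrict [ProperSpace E] (h : IsEscapingHomotopy H f g) :
    IsProperMap fun p : Icc (0 : ℝ) 1 × Ici (0 : ℝ) => H (p.1, p.2) := by
  have hcont : Continuous fun p : Icc (0 : ℝ) 1 × Ici (0 : ℝ) => H (p.1, p.2) :=
    h.continuous.comp (by fun_prop)
  refine isProperMap_iff_isCompact_preimage.2 ⟨hcont, fun K hK => ?_⟩
  obtain ⟨R, hR⟩ := hK.isBounded.subset_closedBall 0
  obtain ⟨T, hT⟩ := eventually_atTop.1 (h.eventually_le_norm (R + 1))
  have hval : IsClosedEmbedding (Prod.map ((↑) : Icc (0 : ℝ) 1 → ℝ) ((↑) : Ici (0 : ℝ) → ℝ)) :=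
    isClosed_Icc.isClosedEmbedding_subtypeVal.prodMap isClosed_Ici.isClosedEmbedding_subtypeVal
  have hbox : IsCompact (Icc (0 : ℝ) 1 ×ˢ Icc 0 T) := isCompact_Icc.prod isCompact_Icc
  refine (hval.isCompact_preimage hbox).of_isClosed_subset (hK.isClosed.preimage hcont) ?_
  rintro ⟨s, t⟩ hst
  refine ⟨s.2, t.2, not_lt.1 fun hTt => ?_⟩
  linarith [hT t hTt.le s s.2, mem_closedBall_zero_iff.1 (hR hst)]

end IsEscapingHomotopy

theorem EscapingHomotopic.symm {f g : ℝ → E} : EscapingHomotopic f g → EscapingHomotopic g f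
  | ⟨_, h⟩ => ⟨_, h.symm⟩

theorem EscapingHomotopic.trans {f g k : ℝ → E} :
    EscapingHomotopic f g → EscapingHomotopic g k → EscapingHomotopic f k
  | ⟨_, h₁⟩, ⟨_, h₂⟩ => ⟨_, h₁.trans h₂⟩

theorem escapingHomotopic_comp_max {γ : ℝ → E} (hγ : Continuous γ)
    (hγ_tendsto : Tendsto (fun t => ‖γ t‖) atTop atTop) (a b : ℝ) :
    EscapingHomotopic (fun t => γ (max a t)) (fun t => γ (max b t)) := by
  refine ⟨fun p => γ (max ((1 - p.1) * a + p.1 * b) p.2),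
    ⟨hγ.comp (by fun_prop), fun t => by simp, fun t => by simp, fun R => ?_⟩⟩
  obtain ⟨T, hT⟩ := eventually_atTop.1 (tendsto_atTop.1 hγ_tendsto R)
  exact eventually_atTop.2 ⟨T, fun t ht s _ => hT _ (ht.trans (le_max_right _ _))⟩

theorem IsProperMap.tendsto_norm_IciExtend [ProperSpace E] {a : ℝ} {γ : Ici a → E}
    (hγ : IsProperMap γ) : Tendsto (fun t => ‖IciExtend γ t‖) atTop atTop :=
  tendsto_norm_cocompact_atTop.comp <|
    (isProperMap_iff_tendsto_cocompact.1 hγ).2.comp (tendsto_projIci_atTop_cocompact a)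

end Escaping

section NormedSpace

variable {E : Type*} [NormedAddCommGroup E] [NormedSpace ℝ E]

theorem escapingHomotopic_norm_div_smul {Δ : ℝ → E} (hΔ : Continuous Δ) (hΔ0 : ∀ t, Δ t ≠ 0)
    (hΔ_tendsto : Tendsto (fun t => ‖Δ t‖) atTop atTop) :
    EscapingHomotopic Δ (fun t => (‖Δ t‖ / ‖Δ 0‖) • Δ 0) := by
  have hnorm : ∀ t, ‖Δ t‖ ≠ 0 := fun t => norm_ne_zero_iff.2 (hΔ0 t)
  -- The homotopy has norm `‖Δ t‖` at every `(s, t)`.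
  refine ⟨fun p => (‖Δ p.2‖ / ‖Δ ((1 - p.1) * p.2)‖) • Δ ((1 - p.1) * p.2),
    ⟨?_, fun t => by simp [hnorm], fun t => by simp, fun R => ?_⟩⟩
  · exact (Continuous.div (by fun_prop) (by fun_prop) fun _ => hnorm _).smul (by fun_prop)
  · refine (tendsto_atTop.1 hΔ_tendsto R).mono fun t ht s _ => ?_
    rwa [norm_smul, norm_div, norm_norm, norm_norm, div_mul_cancel₀ _ (hnorm _)]

theorem escapingHomotopic_smul_of_joinedIn {r r' : ℝ → ℝ} (hr : Continuous r)
    (hr' : Continuous r') (hr_tendsto : Tendsto r atTop atTop)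
    (hr'_tendsto : Tendsto r' atTop atTop) {u v : E} (huv : JoinedIn {0}ᶜ u v) :
    EscapingHomotopic (fun t => r t • u) (fun t => r' t • v) := by
  set q := huv.somePath
  obtain ⟨s₀, -, hs₀⟩ := isCompact_univ.exists_isMinOn univ_nonempty
    (continuous_norm.comp q.continuous).continuousOn
  set m := ‖q s₀‖
  have hm : 0 < m := norm_pos_iff.2 (huv.somePath_mem s₀)
  refine ⟨fun p => ((1 - p.1) * r p.2 + p.1 * r' p.2) • q.extend p.1,
    ⟨by fun_prop, fun t => by simp, fun t => by simp, fun R => ?_⟩⟩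
  filter_upwards [tendsto_atTop.1 hr_tendsto (R / m), tendsto_atTop.1 hr'_tendsto (R / m)]
    with t ht ht' s hs
  have hρ : R / m ≤ (1 - s) * r t + s * r' t := by nlinarith [hs.1, hs.2]
  calc R = R / m * m := (div_mul_cancel₀ R hm.ne').symm
    _ ≤ |(1 - s) * r t + s * r' t| * m :=
      mul_le_mul_of_nonneg_right (hρ.trans (le_abs_self _)) hm.le
    _ ≤ ‖((1 - s) * r t + s * r' t) • q.extend s‖ := by
      rw [norm_smul, Real.norm_eq_abs]
      exact mul_le_mul_of_nonneg_left (hs₀ (mem_univ _)) (abs_nonneg _)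

theorem escapingHomotopic_smul_of_tendsto (hE : 1 < Module.rank ℝ E) {f : ℝ → E}
    (hf : Continuous f) (hf_tendsto : Tendsto (fun t => ‖f t‖) atTop atTop) (a : ℝ) {v : E}
    (hv : v ≠ 0) : EscapingHomotopic (fun t => f (max a t)) (fun t => t • v) := by
  obtain ⟨A, hA⟩ := eventually_atTop.1 (tendsto_atTop.1 hf_tendsto 1)
  set Δ := fun t => f (max A t)
  have hΔ : Continuous Δ := hf.comp (by fun_prop)
  have hΔ0 : ∀ t, Δ t ≠ 0 := fun t =>
    norm_pos_iff.1 (one_pos.trans_le (hA _ (le_max_left A t)))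
  have hΔ_tendsto : Tendsto (fun t => ‖Δ t‖) atTop atTop :=
    hf_tendsto.comp (tendsto_atTop_mono (le_max_right A) tendsto_id)
  have hjoined : JoinedIn {0}ᶜ (Δ 0) v :=
    (isPathConnected_compl_singleton_of_one_lt_rank hE 0).joinedIn _ (hΔ0 0) _ hv
  refine (escapingHomotopic_comp_max hf hf_tendsto a A).trans <|
    (escapingHomotopic_norm_div_smul hΔ hΔ0 hΔ_tendsto).trans <|
    escapingHomotopic_smul_of_joinedIn (by fun_prop) continuous_id
      (hΔ_tendsto.atTop_div_const (norm_pos_iff.2 (hΔ0 0))) tendsto_id hjoined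

theorem IsProperMap.escapingHomotopic_IciExtend [ProperSpace E] (hE : 1 < Module.rank ℝ E)
    {a : ℝ} {γ₀ γ₁ : Ici a → E} (h₀ : IsProperMap γ₀) (h₁ : IsProperMap γ₁) :
    EscapingHomotopic (IciExtend γ₀) (IciExtend γ₁) := by
  have : Nontrivial E := rank_pos_iff_nontrivial.1 (zero_lt_one.trans hE)
  obtain ⟨v, hv⟩ := exists_ne (0 : E)
  have hmax : ∀ γ : Ici a → E, (fun t => IciExtend γ (max a t)) = IciExtend γ := fun γ => by
    ext t; simp [IciExtend_apply]
  have key := fun (γ : Ici a → E) (hγ : IsProperMap γ) =>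
    hmax γ ▸ escapingHomotopic_smul_of_tendsto hE (hγ.continuous.comp continuous_projIci)
      hγ.tendsto_norm_IciExtend a hv
  exact (key γ₀ h₀).trans (key γ₁ h₁).symm

end NormedSpace

/-- Any two proper rays in `ℝⁿ` (`n ≥ 2`) are properly homotopic. -/
theorem proper_rays_properly_homotopic
    (n : ℕ) (hn : 2 ≤ n)
    (γ₀ γ₁ : Set.Ici (0 : ℝ) → EuclideanSpace ℝ (Fin n))
    (h₀ : IsProperMap γ₀) (h₁ : IsProperMap γ₁) :
    ∃ Hmap : Set.Icc (0 : ℝ) 1 × Set.Ici (0 : ℝ) → EuclideanSpace ℝ (Fin n),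
      IsProperMap Hmap ∧
      (∀ t, Hmap (⟨0, by norm_num⟩, t) = γ₀ t) ∧
      (∀ t, Hmap (⟨1, by norm_num⟩, t) = γ₁ t) := by
  have hrank : 1 < Module.rank ℝ (EuclideanSpace ℝ (Fin n)) := by
    rw [← Module.finrank_eq_rank, finrank_euclideanSpace_fin]
    exact_mod_cast hn
  obtain ⟨H, hH⟩ := h₀.escapingHomotopic_IciExtend hrank h₁
  exact ⟨fun p => H (p.1, p.2), hH.isProperMap_restrict,
    fun t => by simp [hH.apply_zero], fun t => by simp [hH.apply_one]⟩
end

section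
/- Image of the inverse limit of a normalized Mittag-Leffler sequence of groups (claim used in the proof of Corollary 5.3): Let (G_i)_{i ∈ ℕ} be groups with homomorphisms f_i : G_{i+1} → G_i such that for every i the image of f_i ∘ f_{i+1} : G_{i+2} → G_i equals the image of f_i : G_{i+1} → G_i. Let L = { z ∈ Π_i G_i : f_i(z_{i+1}) = z_i for all i } be the inverse limit. Then the image of the projection L → G_0, z ↦ z_0, is exactly the image of f_0 : G_1 → G_0. -/
/-- For a normalized Mittag-Leffler inverse sequence of groups, the image of
the projection of the inverse limit to `G 0` is exactly the image of
`f 0 : G 1 →* G 0`. -/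
theorem mittagLeffler_inverseLimit_image
    (G : ℕ → Type*) [∀ i, Group (G i)]
    (f : ∀ i, G (i + 1) →* G i)
    (hml : ∀ i, ((f i).comp (f (i + 1))).range = (f i).range) :
    ∀ g : G 0,
      (∃ z : ∀ i, G i, (∀ i, f i (z (i + 1)) = z i) ∧ z 0 = g) ↔
        g ∈ (f 0).range := by
  intro g
  constructor
  · rintro ⟨z, hz, rfl⟩
    exact ⟨z 1, hz 0⟩
  · intro hg
    have aux : ∀ i (x : G i), x ∈ (f i).range →
        ∃ y : G (i + 1), y ∈ (f (i + 1)).range ∧ f i y = x := by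
      intro i x hx
      rw [← hml i] at hx
      obtain ⟨w, hw⟩ := hx
      exact ⟨f (i + 1) w, ⟨w, rfl⟩, hw⟩
    choose F hF1 hF2 using aux
    let Z : ∀ i, {x : G i // x ∈ (f i).range} := fun i =>
      Nat.rec ⟨g, hg⟩ (fun i p => ⟨F i p.1 p.2, hF1 i p.1 p.2⟩) i
    exact ⟨fun i => (Z i).1, fun i => hF2 i (Z i).1 (Z i).2, rfl⟩
end

section
/- Truncating a countable family of proper rays to a proper multiray (claim in Section 2: 'we can transform such a collection to a multiray by suitably truncating the domains of the rays to achieve properness'): Let X be a locally compact, σ-compact Hausdorff space and let γ_i : [0,∞) → X (i ∈ ℕ) be continuous proper maps. Then there exist real numbers T_i ≥ 0 such that the combined map F : ℕ × [0,∞) → X defined by F(i,t) = γ_i(T_i + t) is continuous and proper. -/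
open Set

/-- A closed subset of `Set.Ici (0:ℝ)` that is bounded above is compact. -/
lemma isCompact_of_isClosed_bddAbove_Ici {s : Set (Set.Ici (0:ℝ))}
    (hcl : IsClosed s) (hbd : BddAbove (Subtype.val '' s)) : IsCompact s := by
  rw [Topology.IsEmbedding.subtypeVal.isCompact_iff]
  obtain ⟨C, hC⟩ := hbd
  apply (isCompact_Icc (a := (0:ℝ)) (b := C)).of_isClosed_subset
  · exact isClosed_Ici.isClosedEmbedding_subtypeVal.isClosedMap _ hcl
  · rintro x ⟨⟨y, hy⟩, hys, rfl⟩
    exact ⟨hy, hC ⟨_, hys, rfl⟩⟩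

/-- A countable family of proper rays in a locally compact, σ-compact
Hausdorff space can be truncated so that the combined map is a proper
multiray. -/
theorem truncate_rays_to_proper_multiray
    (X : Type*) [TopologicalSpace X] [LocallyCompactSpace X]
    [SigmaCompactSpace X] [T2Space X]
    (γ : ℕ → Set.Ici (0 : ℝ) → X)
    (hγ : ∀ i, IsProperMap (γ i)) :
    ∃ T : ℕ → ℝ, ∃ hT : ∀ i, 0 ≤ T i,
      IsProperMap (fun p : ℕ × Set.Ici (0 : ℝ) =>
        γ p.1 ⟨T p.1 + (p.2 : ℝ), add_nonneg (hT p.1) p.2.2⟩) := by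
  classical
  set E := CompactExhaustion.choice X with hE
  -- bound on the preimage of `E i` under `γ i`
  have hS : ∀ i, BddAbove (Subtype.val '' (γ i ⁻¹' (E i))) := fun i =>
    (((hγ i).isCompact_preimage (E.isCompact i)).image continuous_subtype_val).bddAbove
  choose B hB using hS
  refine ⟨fun i => max (B i) 0 + 1, fun i => by positivity, ?_⟩
  set T : ℕ → ℝ := fun i => max (B i) 0 + 1 with hTdef
  have hT : ∀ i, 0 ≤ T i := fun i => by positivity
  -- the shifted rays escape `E i`
  have hesc : ∀ i (t : Set.Ici (0:ℝ)),
      γ i ⟨T i + t, add_nonneg (hT i) t.2⟩ ∉ E i := by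
    intro i t h
    have : T i + (t : ℝ) ≤ B i := hB i ⟨_, h, rfl⟩
    have h1 : B i ≤ max (B i) 0 := le_max_left _ _
    have h2 : (0:ℝ) ≤ t := t.2
    simp only [hTdef] at this
    linarith
  rw [isProperMap_iff_isCompact_preimage]
  constructor
  · -- continuity
    rw [continuous_iff_continuousAt]
    rintro ⟨i, t⟩
    have hcont : Continuous fun p : ℕ × Set.Ici (0:ℝ) =>
        γ i ⟨T i + p.2, add_nonneg (hT i) p.2.2⟩ :=
      (hγ i).continuous.comp <| Continuous.subtype_mk
        (continuous_const.add (continuous_subtype_val.comp continuous_snd)) _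
    apply (hcont.continuousAt (x := (i, t))).congr
    have hopen : IsOpen {p : ℕ × Set.Ici (0:ℝ) | p.1 = i} :=
      (isOpen_discrete {i}).preimage continuous_fst
    filter_upwards [hopen.mem_nhds rfl] with p hp
    obtain ⟨j, u⟩ := p
    cases hp
    rfl
  · -- compactness of preimages
    intro K hK
    obtain ⟨n, hn⟩ := E.exists_superset_of_isCompact hK
    set A : ℕ → Set (Set.Ici (0:ℝ)) := fun i =>
      (fun t : Set.Ici (0:ℝ) => γ i ⟨T i + t, add_nonneg (hT i) t.2⟩) ⁻¹' K with hA
    have hAcont : ∀ i, Continuous fun t : Set.Ici (0:ℝ) =>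
        γ i ⟨T i + t, add_nonneg (hT i) t.2⟩ := fun i =>
      (hγ i).continuous.comp <| Continuous.subtype_mk
        (continuous_const.add continuous_subtype_val) _
    have hAcomp : ∀ i, IsCompact (A i) := by
      intro i
      apply isCompact_of_isClosed_bddAbove_Ici
      · exact hK.isClosed.preimage (hAcont i)
      · obtain ⟨C, hC⟩ :=
          (((hγ i).isCompact_preimage hK).image continuous_subtype_val).bddAbove
        refine ⟨C, ?_⟩
        rintro x ⟨t, ht, rfl⟩
        have : T i + (t : ℝ) ≤ C := hC ⟨_, ht, rfl⟩
        have := hT i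
        linarith
    have heq : (fun p : ℕ × Set.Ici (0 : ℝ) =>
        γ p.1 ⟨T p.1 + (p.2 : ℝ), add_nonneg (hT p.1) p.2.2⟩) ⁻¹' K =
        ⋃ i ∈ Finset.range n, {i} ×ˢ A i := by
      ext ⟨i, t⟩
      simp only [Set.mem_preimage, Set.mem_iUnion, Finset.mem_range, Set.mem_prod,
        Set.mem_singleton_iff, hA, exists_prop]
      constructor
      · intro h
        refine ⟨i, ?_, rfl, h⟩
        by_contra hni
        push_neg at hni
        exact hesc i t (E.subset hni (hn h))
      · rintro ⟨j, -, rfl, h⟩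
        exact h
    rw [heq]
    exact (Finset.range n).isCompact_biUnion fun i _ =>
      isCompact_singleton.prod (hAcomp i)
end
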